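/- arXiv:2004.02177 — 11 statements merged into one kernel-verified Lean document; each statement's English description precedes it below -/
import Mathlib

section
/- Let M ∈ ℝ^{d×d} be a monotone matrix and q ∈ ℝ^d, and define the operator F(z, τ) = (Mz + qτ, −zᵀMz/τ − zᵀq) for (z, τ) ∈ ℝ^d × ℝ with τ > 0. Then F is monotone: for all u = (u_z, u_τ) and w = (w_z, w_τ) with u_τ > 0 and w_τ > 0, one has (F(u) − F(w))ᵀ(u − w) ≥ 0. -/
/-!
The `q`-terms cancel, and after clearing the denominator `uτ * wτ` what remains is the quadratic
form of `M` at `wτ • uz - uτ • wz`, which is nonnegative because `M` is monotone.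
-/

open Matrix

theorem Matrix.dotProduct_mulVec_self_nonneg_of_posSemidef_add_transpose {n : Type*} [Fintype n]
    {M : Matrix n n ℝ} (hM : (M + Mᵀ).PosSemidef) (v : n → ℝ) : 0 ≤ v ⬝ᵥ (M *ᵥ v) := by
  have hsymm : v ⬝ᵥ (Mᵀ *ᵥ v) = v ⬝ᵥ (M *ᵥ v) := by
    rw [dotProduct_mulVec, vecMul_transpose, dotProduct_comm]
  have h := hM.dotProduct_mulVec_nonneg v
  rw [star_trivial, add_mulVec, dotProduct_add, hsymm] at h
  linarith

theorem feasibilityEmbedding_sub_dotProduct_sub_eq {R n : Type*} [Field R] [Fintype n]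
    (M : Matrix n n R) (q uz wz : n → R) {uτ wτ : R} (huτ : uτ ≠ 0) (hwτ : wτ ≠ 0) :
    ((M *ᵥ uz + uτ • q) - (M *ᵥ wz + wτ • q)) ⬝ᵥ (uz - wz) +
      ((-(uz ⬝ᵥ (M *ᵥ uz)) / uτ - uz ⬝ᵥ q) - (-(wz ⬝ᵥ (M *ᵥ wz)) / wτ - wz ⬝ᵥ q)) * (uτ - wτ) =
      (wτ • uz - uτ • wz) ⬝ᵥ (M *ᵥ (wτ • uz - uτ • wz)) / (uτ * wτ) := by
  simp only [mulVec_sub, mulVec_smul, dotProduct_sub, sub_dotProduct, add_dotProduct,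
    smul_dotProduct, dotProduct_smul, smul_eq_mul, dotProduct_comm q, dotProduct_comm (M *ᵥ uz),
    dotProduct_comm (M *ᵥ wz)]
  field_simp
  ring

/-- The homogeneous feasibility-embedding operator
`F(z, τ) = (Mz + τq, -zᵀMz/τ - zᵀq)` (for `τ > 0`) is monotone when `M` is a
monotone matrix. -/
theorem feasibility_embedding_monotone
    {d : ℕ} (M : Matrix (Fin d) (Fin d) ℝ) (q : Fin d → ℝ)
    (hM : (M + Mᵀ).PosSemidef)
    (uz wz : Fin d → ℝ) (uτ wτ : ℝ) (huτ : 0 < uτ) (hwτ : 0 < wτ) :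
    ((M *ᵥ uz + uτ • q) - (M *ᵥ wz + wτ • q)) ⬝ᵥ (uz - wz) +
      ((-(uz ⬝ᵥ (M *ᵥ uz)) / uτ - uz ⬝ᵥ q) -
        (-(wz ⬝ᵥ (M *ᵥ wz)) / wτ - wz ⬝ᵥ q)) * (uτ - wτ) ≥ 0 := by
  rw [feasibilityEmbedding_sub_dotProduct_sub_eq M q uz wz huτ.ne' hwτ.ne']
  exact div_nonneg (dotProduct_mulVec_self_nonneg_of_posSemidef_add_transpose hM _)
    (mul_pos huτ hwτ).le
end

section
/- Let M ∈ ℝ^{d×d} be a monotone matrix and q ∈ ℝ^d. Let u_z, w_z ∈ ℝ^d satisfy u_zᵀM u_z = 0 and w_zᵀM w_z = 0, and let κ_u ≤ −u_zᵀq and κ_w ≤ −w_zᵀq be real numbers. Then for u = (u_z, 0), w = (w_z, 0), and the values (M u_z, κ_u), (M w_z, κ_w), one has ((M u_z, κ_u) − (M w_z, κ_w))ᵀ(u − w) = 0. In particular the infeasibility-embedding operator I is monotone. -/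
open Matrix

/-- The infeasibility-embedding operator `I` (with domain `{(z,0) : zᵀMz = 0}`
and values `{(Mz, κ) : κ ≤ -zᵀq}`) is monotone: in fact the monotonicity
inner product vanishes identically. -/
theorem infeasibility_embedding_monotone
    {d : ℕ} (M : Matrix (Fin d) (Fin d) ℝ) (q : Fin d → ℝ)
    (hM : (M + Mᵀ).PosSemidef)
    (uz wz : Fin d → ℝ) (hu : uz ⬝ᵥ (M *ᵥ uz) = 0) (hw : wz ⬝ᵥ (M *ᵥ wz) = 0)
    (κu κw : ℝ) (hκu : κu ≤ -(uz ⬝ᵥ q)) (hκw : κw ≤ -(wz ⬝ᵥ q)) :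
    ((M *ᵥ uz) - (M *ᵥ wz)) ⬝ᵥ (uz - wz) + (κu - κw) * ((0 : ℝ) - 0) = 0 := by
  have key : ∀ z : Fin d → ℝ, z ⬝ᵥ (M *ᵥ z) = 0 → (M + Mᵀ) *ᵥ z = 0 := by
    intro z hz
    refine (hM.dotProduct_mulVec_zero_iff z).mp ?_
    have h2 : z ⬝ᵥ (Mᵀ *ᵥ z) = z ⬝ᵥ (M *ᵥ z) := by
      rw [mulVec_transpose, dotProduct_mulVec, dotProduct_comm]
    simp only [star_trivial, add_mulVec, dotProduct_add, h2, hz, add_zero]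
  have hAu := key uz hu
  have hAw := key wz hw
  have hA : (M + Mᵀ) *ᵥ (uz - wz) = 0 := by
    rw [mulVec_sub, hAu, hAw, sub_zero]
  have h0 : (uz - wz) ⬝ᵥ ((M + Mᵀ) *ᵥ (uz - wz)) = 0 := by rw [hA, dotProduct_zero]
  have hexp : (uz - wz) ⬝ᵥ ((M + Mᵀ) *ᵥ (uz - wz))
      = 2 * (((M *ᵥ uz) - (M *ᵥ wz)) ⬝ᵥ (uz - wz)) := by
    have h2 : (uz - wz) ⬝ᵥ (Mᵀ *ᵥ (uz - wz)) = (uz - wz) ⬝ᵥ (M *ᵥ (uz - wz)) := by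
      rw [mulVec_transpose, dotProduct_mulVec, dotProduct_comm]
    rw [add_mulVec, dotProduct_add, h2, ← mulVec_sub, dotProduct_comm]
    ring
  have : ((M *ᵥ uz) - (M *ᵥ wz)) ⬝ᵥ (uz - wz) = 0 := by linarith [hexp ▸ h0]
  simp [this]
end

section
/- Let M ∈ ℝ^{d×d} be a monotone matrix and q ∈ ℝ^d. Let u = (u_z, u_τ) with u_τ > 0, and let w = (w_z, 0) with w_zᵀM w_z = 0, and let κ ≤ −w_zᵀq. Then with F(u) = (M u_z + q u_τ, −u_zᵀM u_z/u_τ − u_zᵀq) and v = (M w_z, κ), one has (F(u) − v)ᵀ(u − w) ≥ 0. Hence the union Q = F ∪ I is a monotone operator. -/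
open Matrix

/-- Cross-monotonicity between the feasibility-embedding operator `F` and the
infeasibility-embedding operator `I`: for `u = (u_z, u_τ)` with `u_τ > 0` and
`w = (w_z, 0)` in the domain of `I`, with `v = (M w_z, κ) ∈ I(w)`, we have
`(F(u) - v)ᵀ (u - w) ≥ 0`.  Hence `Q = F ∪ I` is monotone. -/
theorem union_embedding_monotone
    {d : ℕ} (M : Matrix (Fin d) (Fin d) ℝ) (q : Fin d → ℝ)
    (hM : (M + Mᵀ).PosSemidef)
    (uz wz : Fin d → ℝ) (uτ : ℝ) (huτ : 0 < uτ)
    (hw : wz ⬝ᵥ (M *ᵥ wz) = 0) (κ : ℝ) (hκ : κ ≤ -(wz ⬝ᵥ q)) :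
    ((M *ᵥ uz + uτ • q) - M *ᵥ wz) ⬝ᵥ (uz - wz) +
      ((-(uz ⬝ᵥ (M *ᵥ uz)) / uτ - uz ⬝ᵥ q) - κ) * (uτ - 0) ≥ 0 := by
  have hker : (M + Mᵀ) *ᵥ wz = 0 := by
    rw [← hM.dotProduct_mulVec_zero_iff]
    simp [add_mulVec, dotProduct_add, hw, dotProduct_mulVec, vecMul_transpose,
      dotProduct_comm]
  have h1 : M *ᵥ wz = -(Mᵀ *ᵥ wz) := by
    have := hker
    rw [add_mulVec] at this
    linear_combination (norm := module) this
  have h2 : uz ⬝ᵥ (M *ᵥ wz) = -(wz ⬝ᵥ (M *ᵥ uz)) := by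
    rw [h1, dotProduct_neg, dotProduct_mulVec, vecMul_transpose, dotProduct_comm,
      dotProduct_mulVec]
  have hdiv : -(uz ⬝ᵥ (M *ᵥ uz)) / uτ * uτ = -(uz ⬝ᵥ (M *ᵥ uz)) := by
    field_simp
  simp only [sub_dotProduct, add_dotProduct, dotProduct_sub, smul_dotProduct,
    smul_eq_mul, mulVec_sub, dotProduct_mulVec] at *
  have ha : M *ᵥ uz ⬝ᵥ uz = uz ᵥ* M ⬝ᵥ uz := by rw [dotProduct_comm, dotProduct_mulVec]
  have hb : M *ᵥ wz ⬝ᵥ uz = uz ᵥ* M ⬝ᵥ wz := by rw [dotProduct_comm, dotProduct_mulVec]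
  have hc : M *ᵥ uz ⬝ᵥ wz = wz ᵥ* M ⬝ᵥ uz := by rw [dotProduct_comm, dotProduct_mulVec]
  have hd : M *ᵥ wz ⬝ᵥ wz = wz ᵥ* M ⬝ᵥ wz := by rw [dotProduct_comm, dotProduct_mulVec]
  have he : q ⬝ᵥ uz = uz ⬝ᵥ q := dotProduct_comm _ _
  have hf : q ⬝ᵥ wz = wz ⬝ᵥ q := dotProduct_comm _ _
  rw [ha, hb, hc, hd, he, hf, sub_zero]
  nlinarith [hdiv, mul_nonneg huτ.le (neg_nonneg.mpr (by linarith : wz ⬝ᵥ q + κ ≤ 0))]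
end

section
/- Let M ∈ ℝ^{d×d} be a monotone matrix, q ∈ ℝ^d, and C ⊆ ℝ^d a nonempty closed convex cone. Suppose λ ∈ ℝ^d satisfies λᵀq < 0 and λᵀ(Mz + w) ≤ 0 for every z ∈ C and every w ∈ N_C(z). Then λ ∈ C, Mλ ∈ C*, and λᵀMλ = 0; i.e., λ solves LCP(M, 0, C). -/
/-!
The normal cone of `C` at `0` is `-C*`, so the certificate inequality at `z = 0` says that `λ`
lies in the bipolar `C** = C` (Hahn–Banach). At `z = λ`, `w = 0` it gives `λᵀMλ ≤ 0`, while
monotonicity gives `λᵀMλ ≥ 0`; a positive semidefinite form vanishing at `λ` annihilates it,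
so `Mᵀλ = -Mλ`. Finally, for `x ∈ C` the inequality at `z = λ + x`, `w = 0` gives
`(Mλ)ᵀx = -λᵀMx ≥ 0`.
-/

open Matrix

section ClosedConvexCone

variable {E : Type*} [AddCommGroup E] [Module ℝ E] {C : Set E}

theorem zero_mem_of_isClosed_of_smul_mem [TopologicalSpace E] [ContinuousSMul ℝ E]
    (hne : C.Nonempty) (hclosed : IsClosed C) (hcone : ∀ x ∈ C, ∀ t : ℝ, 0 < t → t • x ∈ C) :
    (0 : E) ∈ C := by
  obtain ⟨x, hx⟩ := hne
  have hlim : Filter.Tendsto (fun t : ℝ => t • x) (nhdsWithin 0 (Set.Ioi 0)) (nhds 0) := by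
    simpa using
      (tendsto_nhdsWithin_of_tendsto_nhds (Filter.tendsto_id (x := nhds (0 : ℝ)))).smul_const x
  exact hclosed.mem_of_tendsto hlim (eventually_nhdsWithin_of_forall fun t ht => hcone x hx t ht)

theorem add_mem_of_convex_of_smul_mem (hconv : Convex ℝ C)
    (hcone : ∀ x ∈ C, ∀ t : ℝ, 0 < t → t • x ∈ C) {x y : E} (hx : x ∈ C) (hy : y ∈ C) :
    x + y ∈ C := by
  have hmid : (2 : ℝ)⁻¹ • x + (2 : ℝ)⁻¹ • y ∈ C :=
    hconv hx hy (by norm_num) (by norm_num) (by norm_num)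
  simpa [smul_add, smul_smul] using hcone _ hmid 2 two_pos

theorem mem_of_forall_strongDual_nonpos [TopologicalSpace E] [IsTopologicalAddGroup E]
    [ContinuousSMul ℝ E] [LocallyConvexSpace ℝ E] (h0 : (0 : E) ∈ C)
    (hclosed : IsClosed C) (hconv : Convex ℝ C) (hcone : ∀ x ∈ C, ∀ t : ℝ, 0 < t → t • x ∈ C)
    {x : E} (hx : ∀ f : StrongDual ℝ E, (∀ y ∈ C, f y ≤ 0) → f x ≤ 0) : x ∈ C := by
  by_contra hxC
  obtain ⟨f, u, hfC, hux⟩ := geometric_hahn_banach_closed_point hconv hclosed hxC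
  have hu : 0 < u := by simpa using hfC 0 h0
  have hpolar : ∀ y ∈ C, f y ≤ 0 := fun y hy => by
    by_contra! hfy
    simpa [hfy.ne'] using hfC _ (hcone y hy _ (div_pos hu hfy))
  exact not_lt_of_ge (hx f hpolar) (hu.trans hux)

end ClosedConvexCone

theorem StrongDual.exists_eq_dotProduct {ι : Type*} [Fintype ι] (f : StrongDual ℝ (ι → ℝ)) :
    ∃ w : ι → ℝ, ∀ y, f y = y ⬝ᵥ w := by
  classical
  refine ⟨(dotProductEquiv ℝ ι).symm f, fun y => ?_⟩
  rw [dotProduct_comm, ← dotProductEquiv_apply_apply, LinearEquiv.apply_symm_apply]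
  rfl

theorem mem_of_forall_dotProduct_nonpos {ι : Type*} [Fintype ι] {C : Set (ι → ℝ)}
    (h0 : (0 : ι → ℝ) ∈ C) (hclosed : IsClosed C) (hconv : Convex ℝ C)
    (hcone : ∀ x ∈ C, ∀ t : ℝ, 0 < t → t • x ∈ C) {x : ι → ℝ}
    (hx : ∀ w, (∀ y ∈ C, y ⬝ᵥ w ≤ 0) → x ⬝ᵥ w ≤ 0) : x ∈ C := by
  refine mem_of_forall_strongDual_nonpos h0 hclosed hconv hcone fun f hf => ?_
  obtain ⟨w, hw⟩ := f.exists_eq_dotProduct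
  simp only [hw] at hf ⊢
  exact hx w hf

namespace Matrix

variable {n : Type*} [Fintype n]

theorem dotProduct_add_transpose_mulVec_self {R : Type*} [CommRing R] (M : Matrix n n R)
    (x : n → R) : x ⬝ᵥ ((M + Mᵀ) *ᵥ x) = 2 * (x ⬝ᵥ (M *ᵥ x)) := by
  rw [add_mulVec, dotProduct_add, mulVec_transpose, dotProduct_comm x (x ᵥ* M),
    ← dotProduct_mulVec, two_mul]

theorem dotProduct_mulVec_self_nonneg_of_posSemidef_add_transpose_s7 {M : Matrix n n ℝ}
    (hM : (M + Mᵀ).PosSemidef) (x : n → ℝ) : 0 ≤ x ⬝ᵥ (M *ᵥ x) := by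
  have := hM.dotProduct_mulVec_nonneg x
  rw [star_trivial, dotProduct_add_transpose_mulVec_self] at this
  linarith

theorem transpose_mulVec_eq_neg_of_posSemidef_add_transpose {M : Matrix n n ℝ}
    (hM : (M + Mᵀ).PosSemidef) {x : n → ℝ} (hx : x ⬝ᵥ (M *ᵥ x) = 0) : Mᵀ *ᵥ x = -(M *ᵥ x) := by
  have hker : (M + Mᵀ) *ᵥ x = 0 := by
    rw [← hM.dotProduct_mulVec_zero_iff, star_trivial, dotProduct_add_transpose_mulVec_self, hx,
      mul_zero]
  rw [add_mulVec] at hker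
  exact eq_neg_of_add_eq_zero_right hker

end Matrix

theorem strong_infeasibility_certificate_solves_homogeneous_lcp_general
    {d : ℕ} (M : Matrix (Fin d) (Fin d) ℝ)
    (hM : (M + Mᵀ).PosSemidef)
    (C : Set (Fin d → ℝ))
    (hne : C.Nonempty) (hclosed : IsClosed C) (hconv : Convex ℝ C)
    (hcone : ∀ x ∈ C, ∀ t : ℝ, 0 < t → t • x ∈ C)
    (lam : Fin d → ℝ)
    (hsep : ∀ z ∈ C, ∀ w : Fin d → ℝ, (∀ y ∈ C, (y - z) ⬝ᵥ w ≤ 0) →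
      lam ⬝ᵥ (M *ᵥ z + w) ≤ 0) :
    lam ∈ C ∧ (∀ x ∈ C, (M *ᵥ lam) ⬝ᵥ x ≥ 0) ∧ lam ⬝ᵥ (M *ᵥ lam) = 0 := by
  have h0 : (0 : Fin d → ℝ) ∈ C := zero_mem_of_isClosed_of_smul_mem hne hclosed hcone
  have hlam : lam ∈ C := mem_of_forall_dotProduct_nonpos h0 hclosed hconv hcone fun w hw => by
    simpa using hsep 0 h0 w (by simpa using hw)
  have hself : lam ⬝ᵥ (M *ᵥ lam) = 0 := le_antisymm
    (by simpa using hsep lam hlam 0 (by simp))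
    (dotProduct_mulVec_self_nonneg_of_posSemidef_add_transpose_s7 hM lam)
  refine ⟨hlam, fun x hx => ?_, hself⟩
  have hMx : lam ⬝ᵥ (M *ᵥ x) ≤ 0 := by
    simpa [mulVec_add, hself] using
      hsep (lam + x) (add_mem_of_convex_of_smul_mem hconv hcone hlam hx) 0 (by simp)
  have hskew : (M *ᵥ lam) ⬝ᵥ x = -(lam ⬝ᵥ (M *ᵥ x)) := by
    rw [dotProduct_mulVec lam M x, ← mulVec_transpose,
      transpose_mulVec_eq_neg_of_posSemidef_add_transpose hM hself, neg_dotProduct, neg_neg]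
  linarith

/-- A certificate of strong infeasibility of `LCP(M, q, C)` solves `LCP(M, 0, C)`:
if `λᵀq < 0` and `λᵀ(Mz + w) ≤ 0` for every `z ∈ C` and `w ∈ N_C(z)`, then
`λ ∈ C`, `Mλ ∈ C*` and `λᵀMλ = 0`. -/
theorem strong_infeasibility_certificate_solves_homogeneous_lcp
    {d : ℕ} (M : Matrix (Fin d) (Fin d) ℝ) (q : Fin d → ℝ)
    (hM : (M + Mᵀ).PosSemidef)
    (C : Set (Fin d → ℝ))
    (hne : C.Nonempty) (hclosed : IsClosed C) (hconv : Convex ℝ C)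
    (hcone : ∀ x ∈ C, ∀ t : ℝ, 0 < t → t • x ∈ C)
    (lam : Fin d → ℝ) (hq : lam ⬝ᵥ q < 0)
    (hsep : ∀ z ∈ C, ∀ w : Fin d → ℝ, (∀ y ∈ C, (y - z) ⬝ᵥ w ≤ 0) →
      lam ⬝ᵥ (M *ᵥ z + w) ≤ 0) :
    lam ∈ C ∧ (∀ x ∈ C, (M *ᵥ lam) ⬝ᵥ x ≥ 0) ∧ lam ⬝ᵥ (M *ᵥ lam) = 0 :=
  strong_infeasibility_certificate_solves_homogeneous_lcp_general M hM C hne hclosed hconv hcone lam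
    hsep
end

section
/- Let M ∈ ℝ^{d×d} be a monotone matrix, q ∈ ℝ^d, and C ⊆ ℝ^d a nonempty closed convex cone. Suppose λ ∈ ℝ^d satisfies λ ∈ C, Mλ ∈ C*, λᵀMλ = 0, and λᵀq < 0. Then λ is a certificate of strong infeasibility: λᵀ(Mz + w) ≤ 0 for every z ∈ C and every w ∈ N_C(z). -/
open Matrix

/-- A solution of `LCP(M, 0, C)` with `λᵀq < 0` is a certificate of strong
infeasibility of `LCP(M, q, C)`: `λᵀ(Mz + w) ≤ 0` for every `z ∈ C` and every
`w ∈ N_C(z)`. -/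
theorem homogeneous_lcp_solution_is_strong_infeasibility_certificate
    {d : ℕ} (M : Matrix (Fin d) (Fin d) ℝ) (q : Fin d → ℝ)
    (hM : (M + Mᵀ).PosSemidef)
    (C : Set (Fin d → ℝ))
    (hne : C.Nonempty) (hclosed : IsClosed C) (hconv : Convex ℝ C)
    (hcone : ∀ x ∈ C, ∀ t : ℝ, 0 < t → t • x ∈ C)
    (lam : Fin d → ℝ) (hlam : lam ∈ C)
    (hdual : ∀ x ∈ C, (M *ᵥ lam) ⬝ᵥ x ≥ 0)
    (hcomp : lam ⬝ᵥ (M *ᵥ lam) = 0)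
    (hq : lam ⬝ᵥ q < 0) :
    ∀ z ∈ C, ∀ w : Fin d → ℝ, (∀ y ∈ C, (y - z) ⬝ᵥ w ≤ 0) →
      lam ⬝ᵥ (M *ᵥ z + w) ≤ 0 := by
  intro z hz w hw
  -- 0 ∈ C
  obtain ⟨x0, hx0⟩ := hne
  have h0 : (0 : Fin d → ℝ) ∈ C := by
    have : Filter.Tendsto (fun t : ℝ => t • x0) (nhdsWithin 0 (Set.Ioi 0)) (nhds 0) := by
      have h := (Filter.tendsto_id (x := nhds (0:ℝ))).smul_const x0
      simpa using h.mono_left nhdsWithin_le_nhds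
    exact hclosed.mem_of_tendsto this
      (Filter.eventually_of_mem self_mem_nhdsWithin fun t ht => hcone x0 hx0 t ht)
  -- z ⬝ᵥ w = 0
  have hzw : z ⬝ᵥ w = 0 := by
    have h1 := hw 0 h0
    have h2 := hw ((2:ℝ) • z) (hcone z hz 2 two_pos)
    simp only [zero_sub, neg_dotProduct] at h1
    have h2' : z ⬝ᵥ w ≤ 0 := by
      have : ((2:ℝ) • z - z) = z := by ring_nf; module
      rwa [this] at h2
    linarith
  have hlw : lam ⬝ᵥ w ≤ 0 := by
    have := hw lam hlam
    rw [sub_dotProduct, hzw] at this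
    linarith
  -- (M + Mᵀ) *ᵥ lam = 0
  have hsym : (M + Mᵀ) *ᵥ lam = 0 := by
    rw [← hM.dotProduct_mulVec_zero_iff lam]
    have : lam ⬝ᵥ (Mᵀ *ᵥ lam) = lam ⬝ᵥ (M *ᵥ lam) := by
      rw [dotProduct_mulVec, vecMul_transpose, dotProduct_comm]
    simp only [star_trivial, add_mulVec, dotProduct_add, this, hcomp]
    norm_num
  have hMt : Mᵀ *ᵥ lam = -(M *ᵥ lam) := by
    have := hsym
    rw [add_mulVec] at this
    linear_combination (norm := module) this
  have hMz : lam ⬝ᵥ (M *ᵥ z) ≤ 0 := by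
    have : lam ⬝ᵥ (M *ᵥ z) = (Mᵀ *ᵥ lam) ⬝ᵥ z := by
      rw [dotProduct_mulVec, ← vecMul_transpose, transpose_transpose]
    rw [this, hMt, neg_dotProduct]
    have := hdual z hz
    linarith
  rw [dotProduct_add]
  linarith
end

section
/- Let M ∈ ℝ^{d×d} be a monotone matrix, q ∈ ℝ^d, and C ⊆ ℝ^d a nonempty closed convex cone. It cannot simultaneously hold that some z ∈ ℝ^d solves LCP(M, q, C) (i.e., z ∈ C, Mz + q ∈ C*, zᵀ(Mz + q) = 0) and some λ ∈ ℝ^d solves LCP(M, 0, C) with λᵀq < 0 (i.e., λ ∈ C, Mλ ∈ C*, λᵀMλ = 0, λᵀq < 0). -/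
open Matrix

/-- Weak alternatives: `LCP(M, q, C)` cannot have a solution `z` at the same time
as `LCP(M, 0, C)` has a solution `λ` with `λᵀq < 0`. -/
theorem lcp_solution_and_infeasibility_certificate_exclusive
    {d : ℕ} (M : Matrix (Fin d) (Fin d) ℝ) (q : Fin d → ℝ)
    (hM : (M + Mᵀ).PosSemidef)
    (C : Set (Fin d → ℝ))
    (hne : C.Nonempty) (hclosed : IsClosed C) (hconv : Convex ℝ C)
    (hcone : ∀ x ∈ C, ∀ t : ℝ, 0 < t → t • x ∈ C) :
    ¬ ((∃ z : Fin d → ℝ, z ∈ C ∧ (∀ x ∈ C, (M *ᵥ z + q) ⬝ᵥ x ≥ 0) ∧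
          z ⬝ᵥ (M *ᵥ z + q) = 0) ∧
       (∃ lam : Fin d → ℝ, lam ∈ C ∧ (∀ x ∈ C, (M *ᵥ lam) ⬝ᵥ x ≥ 0) ∧
          lam ⬝ᵥ (M *ᵥ lam) = 0 ∧ lam ⬝ᵥ q < 0)) := by
  rintro ⟨⟨z, hzC, hzdual, _⟩, ⟨lam, hlamC, hlamdual, hlam0, hlamq⟩⟩
  -- From λᵀ(M+Mᵀ)λ = 0 and PSD, conclude (M+Mᵀ)λ = 0.
  have hquad : star lam ⬝ᵥ (M + Mᵀ) *ᵥ lam = 0 := by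
    simp only [star_trivial, add_mulVec, dotProduct_add]
    have h : lam ⬝ᵥ Mᵀ *ᵥ lam = lam ⬝ᵥ M *ᵥ lam := by
      rw [mulVec_transpose, dotProduct_comm, dotProduct_mulVec]
    rw [h, hlam0, add_zero]
  have hker : (M + Mᵀ) *ᵥ lam = 0 := (hM.dotProduct_mulVec_zero_iff lam).mp hquad
  have hMt : Mᵀ *ᵥ lam = -(M *ᵥ lam) := by
    rw [add_mulVec] at hker
    exact eq_neg_of_add_eq_zero_right hker
  have h1 : (M *ᵥ z + q) ⬝ᵥ lam ≥ 0 := hzdual lam hlamC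
  have h2 : (M *ᵥ lam) ⬝ᵥ z ≥ 0 := hlamdual z hzC
  have h3 : (M *ᵥ z) ⬝ᵥ lam = -((M *ᵥ lam) ⬝ᵥ z) := by
    rw [dotProduct_comm, dotProduct_mulVec, ← mulVec_transpose, hMt, neg_dotProduct, dotProduct_comm]
  rw [add_dotProduct, h3] at h1
  have : lam ⬝ᵥ q = q ⬝ᵥ lam := dotProduct_comm _ _
  linarith
end

section
/- Let M ∈ ℝ^{d×d}, q ∈ ℝ^d, and C ⊆ ℝ^d a nonempty closed convex cone. If z★ solves LCP(M, q, C), i.e., z★ ∈ C, Mz★ + q ∈ C*, and (z★)ᵀ(Mz★ + q) = 0, then for every t > 0 the point u = (t z★, t) solves the homogeneous embedding MCP(F, C × ℝ₊): u ∈ C × ℝ₊, F(u) ∈ C* × ℝ₊, and uᵀF(u) = 0, where F(z, τ) = (Mz + qτ, −zᵀMz/τ − zᵀq). -/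
open Matrix

/-- If `z★` solves `LCP(M, q, C)` then, for every `t > 0`, the point
`u = (t z★, t)` solves the homogeneous embedding `MCP(F, C × ℝ₊)`, where
`F(z, τ) = (Mz + τq, -zᵀMz/τ - zᵀq)`. -/
theorem lcp_solution_gives_homogeneous_embedding_solution
    {d : ℕ} (M : Matrix (Fin d) (Fin d) ℝ) (q : Fin d → ℝ)
    (C : Set (Fin d → ℝ))
    (hne : C.Nonempty) (hclosed : IsClosed C) (hconv : Convex ℝ C)
    (hcone : ∀ x ∈ C, ∀ s : ℝ, 0 < s → s • x ∈ C)
    (zstar : Fin d → ℝ) (hzC : zstar ∈ C)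
    (hdual : ∀ x ∈ C, (M *ᵥ zstar + q) ⬝ᵥ x ≥ 0)
    (hcomp : zstar ⬝ᵥ (M *ᵥ zstar + q) = 0)
    (t : ℝ) (ht : 0 < t) :
    -- u = (t z★, t) ∈ C × ℝ₊
    (t • zstar ∈ C ∧ 0 ≤ t) ∧
    -- F(u) ∈ C* × ℝ₊
    ((∀ x ∈ C, (M *ᵥ (t • zstar) + t • q) ⬝ᵥ x ≥ 0) ∧
      0 ≤ -((t • zstar) ⬝ᵥ (M *ᵥ (t • zstar))) / t - (t • zstar) ⬝ᵥ q) ∧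
    -- uᵀ F(u) = 0
    (t • zstar) ⬝ᵥ (M *ᵥ (t • zstar) + t • q) +
      t * (-((t • zstar) ⬝ᵥ (M *ᵥ (t • zstar))) / t - (t • zstar) ⬝ᵥ q) = 0 := by
  have hab : zstar ⬝ᵥ (M *ᵥ zstar) + zstar ⬝ᵥ q = 0 := by
    rw [← dotProduct_add]; exact hcomp
  refine ⟨⟨hcone _ hzC t ht, ht.le⟩, ⟨?_, ?_⟩, ?_⟩
  · intro x hx
    have h := hdual x hx
    have : (M *ᵥ (t • zstar) + t • q) ⬝ᵥ x = t * ((M *ᵥ zstar + q) ⬝ᵥ x) := by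
      rw [mulVec_smul, ← smul_add, smul_dotProduct]; rfl
    rw [this]
    exact mul_nonneg ht.le h
  · simp only [mulVec_smul, smul_dotProduct, dotProduct_smul, dotProduct_add, smul_eq_mul]
    have : -(t * (t * zstar ⬝ᵥ M *ᵥ zstar)) / t = -(t * (zstar ⬝ᵥ M *ᵥ zstar)) := by
      field_simp
    rw [this]
    nlinarith [hab]
  · simp only [mulVec_smul, smul_dotProduct, dotProduct_smul, dotProduct_add, smul_eq_mul]
    have : -(t * (t * zstar ⬝ᵥ M *ᵥ zstar)) / t = -(t * (zstar ⬝ᵥ M *ᵥ zstar)) := by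
      field_simp
    rw [this]
    nlinarith [hab]
end

section
/- Let M ∈ ℝ^{d×d}, q ∈ ℝ^d, and C ⊆ ℝ^d a nonempty closed convex cone. Suppose u = (z, τ) with τ > 0 satisfies u ∈ C × ℝ₊, F(u) ∈ C* × ℝ₊, and uᵀF(u) = 0, where F(z, τ) = (Mz + qτ, −zᵀMz/τ − zᵀq). Then z/τ solves LCP(M, q, C): z/τ ∈ C, M(z/τ) + q ∈ C*, and (z/τ)ᵀ(M(z/τ) + q) = 0. -/
open Matrix

/-- If `u = (z, τ)` with `τ > 0` solves the homogeneous embedding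
`MCP(F, C × ℝ₊)`, where `F(z, τ) = (Mz + τq, -zᵀMz/τ - zᵀq)`, then `z/τ` solves
`LCP(M, q, C)`. -/
theorem homogeneous_embedding_solution_gives_lcp_solution
    {d : ℕ} (M : Matrix (Fin d) (Fin d) ℝ) (q : Fin d → ℝ)
    (C : Set (Fin d → ℝ))
    (hne : C.Nonempty) (hclosed : IsClosed C) (hconv : Convex ℝ C)
    (hcone : ∀ x ∈ C, ∀ s : ℝ, 0 < s → s • x ∈ C)
    (z : Fin d → ℝ) (τ : ℝ) (hτ : 0 < τ)
    -- u = (z, τ) ∈ C × ℝ₊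
    (hzC : z ∈ C)
    -- F(u) ∈ C* × ℝ₊
    (hdual : ∀ x ∈ C, (M *ᵥ z + τ • q) ⬝ᵥ x ≥ 0)
    (hsecond : 0 ≤ -(z ⬝ᵥ (M *ᵥ z)) / τ - z ⬝ᵥ q)
    -- uᵀ F(u) = 0
    (hcomp : z ⬝ᵥ (M *ᵥ z + τ • q) + τ * (-(z ⬝ᵥ (M *ᵥ z)) / τ - z ⬝ᵥ q) = 0) :
    τ⁻¹ • z ∈ C ∧ (∀ x ∈ C, (M *ᵥ (τ⁻¹ • z) + q) ⬝ᵥ x ≥ 0) ∧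
      (τ⁻¹ • z) ⬝ᵥ (M *ᵥ (τ⁻¹ • z) + q) = 0 := by
  have hτ' : τ ≠ 0 := ne_of_gt hτ
  have hτinv : 0 < τ⁻¹ := inv_pos.mpr hτ
  have hkey : M *ᵥ (τ⁻¹ • z) + q = τ⁻¹ • (M *ᵥ z + τ • q) := by
    rw [Matrix.mulVec_smul, smul_add, smul_smul, inv_mul_cancel₀ hτ', one_smul]
  refine ⟨hcone z hzC τ⁻¹ hτinv, ?_, ?_⟩
  · intro x hx
    rw [hkey, smul_dotProduct]
    exact mul_nonneg (le_of_lt hτinv) (hdual x hx)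
  · -- z ⬝ (Mz + τq) ≥ 0 from hdual at z, ≤ 0 from hsecond
    have h1 : (M *ᵥ z + τ • q) ⬝ᵥ z ≥ 0 := hdual z hzC
    have h1' : z ⬝ᵥ (M *ᵥ z + τ • q) ≥ 0 := by rwa [dotProduct_comm] at h1
    have h2 : z ⬝ᵥ (M *ᵥ z + τ • q) ≤ 0 := by
      have ht := mul_nonneg (le_of_lt hτ) hsecond
      rw [dotProduct_add, dotProduct_smul, smul_eq_mul]
      have hd : τ * (-(z ⬝ᵥ M *ᵥ z) / τ) = -(z ⬝ᵥ M *ᵥ z) := by field_simp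
      nlinarith
    have h0 : z ⬝ᵥ (M *ᵥ z + τ • q) = 0 := le_antisymm h2 h1'
    rw [hkey, smul_dotProduct, dotProduct_smul, h0]
    simp
end

section
/- Let P ∈ ℝ^{n×n} be symmetric positive semidefinite, A ∈ ℝ^{m×n}, c ∈ ℝ^n, b ∈ ℝ^m, and K ⊆ ℝ^m a nonempty closed convex cone. Suppose λ = (x, y) ∈ ℝ^n × ℝ^m satisfies x ∈ ℝ^n, y ∈ K*, Px + Aᵀy = 0 (membership of Mλ in {0}^n × K in the first block), −Ax ∈ K, λᵀMλ = xᵀ(Px + Aᵀy) − yᵀAx = 0, and cᵀx + bᵀy < 0, where M = (P, Aᵀ; −A, 0). Then Px = 0, Aᵀy = 0, yᵀAx = 0, and at least one of cᵀx < 0 or bᵀy < 0 holds; in the first case x is a certificate of dual infeasibility of the QCP (Px = 0, −Ax ∈ K, cᵀx < 0), and in the second case y is a certificate of primal infeasibility (Aᵀy = 0, y ∈ K*, bᵀy < 0). -/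
open Matrix

/-- An LCP infeasibility certificate `λ = (x, y)` for the LCP arising from a QCP
yields a QCP infeasibility certificate: `Px = 0`, `Aᵀy = 0`, `yᵀAx = 0`, and
either `cᵀx < 0` (so `x` certifies dual infeasibility: `Px = 0`, `-Ax ∈ K`,
`cᵀx < 0`) or `bᵀy < 0` (so `y` certifies primal infeasibility: `Aᵀy = 0`,
`y ∈ K*`, `bᵀy < 0`). -/
theorem lcp_certificate_gives_qcp_certificate
    {n m : ℕ} (P : Matrix (Fin n) (Fin n) ℝ) (A : Matrix (Fin m) (Fin n) ℝ)
    (c : Fin n → ℝ) (b : Fin m → ℝ)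
    (hP : P.PosSemidef)
    (K : Set (Fin m → ℝ))
    (hne : K.Nonempty) (hclosed : IsClosed K) (hconv : Convex ℝ K)
    (hcone : ∀ s ∈ K, ∀ t : ℝ, 0 < t → t • s ∈ K)
    (x : Fin n → ℝ) (y : Fin m → ℝ)
    -- λ = (x, y) ∈ ℝ^n × K*
    (hy : ∀ s ∈ K, y ⬝ᵥ s ≥ 0)
    -- Mλ ∈ {0}^n × K
    (hfirst : P *ᵥ x + Aᵀ *ᵥ y = 0)
    (hsecond : -(A *ᵥ x) ∈ K)
    -- λᵀMλ = 0
    (hcomp : x ⬝ᵥ (P *ᵥ x + Aᵀ *ᵥ y) - y ⬝ᵥ (A *ᵥ x) = 0)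
    -- λᵀq < 0
    (hneg : c ⬝ᵥ x + b ⬝ᵥ y < 0) :
    P *ᵥ x = 0 ∧ Aᵀ *ᵥ y = 0 ∧ y ⬝ᵥ (A *ᵥ x) = 0 ∧
      ((c ⬝ᵥ x < 0 ∧ P *ᵥ x = 0 ∧ -(A *ᵥ x) ∈ K ∧ c ⬝ᵥ x < 0) ∨
       (b ⬝ᵥ y < 0 ∧ Aᵀ *ᵥ y = 0 ∧ (∀ s ∈ K, y ⬝ᵥ s ≥ 0) ∧ b ⬝ᵥ y < 0)) := by
  have hzero : x ⬝ᵥ (P *ᵥ x + Aᵀ *ᵥ y) = 0 := by rw [hfirst, dotProduct_zero]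
  have hyAx : y ⬝ᵥ (A *ᵥ x) = 0 := by linarith [hcomp, hzero]
  have hxAty : x ⬝ᵥ (Aᵀ *ᵥ y) = 0 := by
    rw [dotProduct_mulVec, vecMul_transpose, dotProduct_comm]
    exact hyAx
  have hxPx : x ⬝ᵥ (P *ᵥ x) = 0 := by
    rw [dotProduct_add] at hzero; linarith
  have hPx : P *ᵥ x = 0 := by
    have := (hP.dotProduct_mulVec_zero_iff x).mp (by simpa using hxPx)
    exact this
  have hAty : Aᵀ *ᵥ y = 0 := by
    have := hfirst; rw [hPx, zero_add] at this; exact this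
  refine ⟨hPx, hAty, hyAx, ?_⟩
  by_cases hc : c ⬝ᵥ x < 0
  · exact Or.inl ⟨hc, hPx, hsecond, hc⟩
  · exact Or.inr ⟨by linarith, hAty, hy, by linarith⟩
end

section
/- Let T : ℝ^d → ℝ^d be a map that (1) is positively homogeneous (T(tv) = tT(v) for all t > 0 and v ∈ ℝ^d), (2) has a nonzero fixed point w★ (T(w★) = w★), and (3) is non-expansive toward every fixed point of T (‖T(v) − u‖₂ ≤ ‖v − u‖₂ whenever T(u) = u). Fix w⁰ ∈ ℝ^d with (w★)ᵀw⁰ > 0 and define w^{k+1} = T(w^k) for k = 0, 1, …. Then ‖w^k‖₂ ≥ (w★)ᵀw⁰ / ‖w★‖₂ > 0 for all k. -/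
open scoped RealInnerProductSpace

/-- Iterates of a positively homogeneous map that is non-expansive toward each of
its fixed points, initialized with `⟪w★, w⁰⟫ > 0` for a nonzero fixed point `w★`,
stay bounded away from zero: `‖w^k‖ ≥ ⟪w★, w⁰⟫ / ‖w★‖ > 0`. -/
theorem iterates_bounded_away_from_zero
    {d : ℕ} (T : EuclideanSpace ℝ (Fin d) → EuclideanSpace ℝ (Fin d))
    (hhomog : ∀ (t : ℝ), 0 < t → ∀ v, T (t • v) = t • T v)
    (wstar : EuclideanSpace ℝ (Fin d)) (hfix : T wstar = wstar)
    (hstar_ne : wstar ≠ 0)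
    (hnonexp : ∀ u, T u = u → ∀ v, ‖T v - u‖ ≤ ‖v - u‖)
    (w : ℕ → EuclideanSpace ℝ (Fin d))
    (hinit : ⟪wstar, w 0⟫ > 0)
    (hiter : ∀ k : ℕ, w (k + 1) = T (w k)) :
    ∀ k : ℕ, ‖w k‖ ≥ ⟪wstar, w 0⟫ / ‖wstar‖ ∧ 0 < ⟪wstar, w 0⟫ / ‖wstar‖ := by
  have hns : (0:ℝ) < ‖wstar‖ := norm_pos_iff.mpr hstar_ne
  have hfixt : ∀ t : ℝ, 0 < t → T (t • wstar) = t • wstar := by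
    intro t ht; rw [hhomog t ht, hfix]
  have hmono : ∀ t : ℝ, 0 < t → ∀ k, ‖w k - t • wstar‖ ≤ ‖w 0 - t • wstar‖ := by
    intro t ht k
    induction k with
    | zero => exact le_refl _
    | succ n ih =>
      rw [hiter n]
      exact le_trans (hnonexp _ (hfixt t ht) (w n)) ih
  -- squared version gives inner product bound
  have hinner : ∀ k, ⟪wstar, w 0⟫ ≤ ⟪wstar, w k⟫ := by
    intro k
    by_contra hlt
    push_neg at hlt
    set a : ℝ := ⟪wstar, w 0⟫ - ⟪wstar, w k⟫ with ha
    have ha0 : 0 < a := sub_pos.mpr hlt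
    have key : ∀ t : ℝ, 0 < t → 2 * t * a ≤ ‖w 0‖ ^ 2 - ‖w k‖ ^ 2 := by
      intro t ht
      have h := hmono t ht k
      have h2 : ‖w k - t • wstar‖ ^ 2 ≤ ‖w 0 - t • wstar‖ ^ 2 := by
        exact pow_le_pow_left₀ (norm_nonneg _) h 2
      rw [norm_sub_sq_real, norm_sub_sq_real] at h2
      have e1 : ⟪w k, t • wstar⟫ = t * ⟪wstar, w k⟫ := by
        rw [real_inner_smul_right, real_inner_comm]
      have e2 : ⟪w 0, t • wstar⟫ = t * ⟪wstar, w 0⟫ := by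
        rw [real_inner_smul_right, real_inner_comm]
      rw [e1, e2] at h2
      simp only [ha]
      nlinarith
    set C : ℝ := ‖w 0‖ ^ 2 - ‖w k‖ ^ 2 with hC
    have hC0 : 0 < C := by
      have := key 1 one_pos
      nlinarith
    have hkey := key (C / a) (div_pos hC0 ha0)
    have hne : a ≠ 0 := ne_of_gt ha0
    have h2C : 2 * C ≤ C := by
      calc 2 * C = 2 * (C / a) * a := by field_simp
        _ ≤ C := hkey
    linarith
  intro k
  have hcs : ⟪wstar, w k⟫ ≤ ‖wstar‖ * ‖w k‖ := real_inner_le_norm _ _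
  constructor
  · rw [ge_iff_le, div_le_iff₀ hns]
    calc ⟪wstar, w 0⟫ ≤ ⟪wstar, w k⟫ := hinner k
      _ ≤ ‖wstar‖ * ‖w k‖ := hcs
      _ = ‖w k‖ * ‖wstar‖ := mul_comm _ _
  · exact div_pos hinit hns
end

section
/- Let M ∈ ℝ^{d×d} be a monotone matrix, q, μ ∈ ℝ^d, η ∈ ℝ, and suppose p, r ∈ ℝ^d satisfy (I + M)p = μ and (I + M)r = q. Define a = 1 + rᵀr, b = rᵀμ − 2rᵀp − η, and c = pᵀ(p − μ). Then a > 0, c ≤ 0, and the discriminant satisfies b² − 4ac ≥ 0; consequently the quadratic equation aτ² + bτ + c = 0 has a real nonnegative root τ = (−b + √(b² − 4ac))/(2a) ≥ 0. -/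
open Matrix

/-!
Monotonicity of `M` gives `pᵀMp ≥ 0`, and `(I + M)p = μ` turns `c = pᵀ(p - μ)` into `-pᵀMp`,
so `c ≤ 0`. Together with `a ≥ 1` this makes `-4ac ≥ 0`, hence the discriminant is at least `b²`
and the larger root `(-b + √(b² - 4ac)) / (2a)` is real and nonnegative.
-/

theorem Matrix.PosSemidef.dotProduct_mulVec_nonneg_of_add_transpose
    {n R : Type*} [Fintype n] [Field R] [LinearOrder R] [IsStrictOrderedRing R]
    [StarRing R] [TrivialStar R] {M : Matrix n n R} (hM : (M + Mᵀ).PosSemidef) (x : n → R) :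
    0 ≤ x ⬝ᵥ (M *ᵥ x) := by
  have hsymm : x ⬝ᵥ ((M + Mᵀ) *ᵥ x) = 2 * (x ⬝ᵥ (M *ᵥ x)) := by
    rw [add_mulVec, dotProduct_add, mulVec_transpose, dotProduct_comm x (x ᵥ* M),
      ← dotProduct_mulVec]
    ring
  have h := hM.dotProduct_mulVec_nonneg x
  rw [star_trivial, hsymm] at h
  linarith

theorem dotProduct_sub_eq_neg_of_one_add_mulVec_eq
    {n R : Type*} [Fintype n] [DecidableEq n] [CommRing R] {M : Matrix n n R} {p μ : n → R}
    (hp : (1 + M) *ᵥ p = μ) : p ⬝ᵥ (p - μ) = -(p ⬝ᵥ (M *ᵥ p)) := by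
  rw [← hp, add_mulVec, one_mulVec, sub_add_cancel_left, dotProduct_neg]

theorem discrim_nonneg_of_mul_nonpos {a b c : ℝ} (hac : a * c ≤ 0) : 0 ≤ discrim a b c := by
  unfold discrim
  nlinarith [sq_nonneg b]

theorem quadratic_eq_zero_of_eq_sqrt_discrim {a b c τ : ℝ} (ha : a ≠ 0)
    (hd : 0 ≤ discrim a b c) (hτ : τ = (-b + √(discrim a b c)) / (2 * a)) :
    a * τ ^ 2 + b * τ + c = 0 := by
  have hsq : discrim a b c = √(discrim a b c) * √(discrim a b c) := (Real.mul_self_sqrt hd).symm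
  rw [sq, quadratic_eq_zero_iff ha hsq]
  exact Or.inl hτ

theorem neg_add_sqrt_discrim_nonneg_of_mul_nonpos {a b c : ℝ} (hac : a * c ≤ 0) :
    0 ≤ -b + √(discrim a b c) := by
  have hb : |b| ≤ √(discrim a b c) := by
    rw [← Real.sqrt_sq_eq_abs]
    exact Real.sqrt_le_sqrt (by unfold discrim; nlinarith)
  linarith [le_abs_self b]

theorem resolvent_quadratic_has_nonneg_root_general
    {d : ℕ} (M : Matrix (Fin d) (Fin d) ℝ)
    (hM : (M + Mᵀ).PosSemidef)
    (μ : Fin d → ℝ)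
    (p r : Fin d → ℝ)
    (hp : (1 + M) *ᵥ p = μ)
    (a b c : ℝ)
    (ha : a = 1 + r ⬝ᵥ r)
    (hc : c = p ⬝ᵥ (p - μ))
    (τ : ℝ) (hτ : τ = (-b + Real.sqrt (b ^ 2 - 4 * a * c)) / (2 * a)) :
    0 < a ∧ c ≤ 0 ∧ b ^ 2 - 4 * a * c ≥ 0 ∧
      a * τ ^ 2 + b * τ + c = 0 ∧ 0 ≤ τ := by
  have ha_pos : 0 < a := by
    rw [ha]
    linarith [(star_trivial r ▸ dotProduct_star_self_nonneg r : 0 ≤ r ⬝ᵥ r)]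
  have hc_nonpos : c ≤ 0 := by
    rw [hc, dotProduct_sub_eq_neg_of_one_add_mulVec_eq hp, neg_nonpos]
    exact hM.dotProduct_mulVec_nonneg_of_add_transpose p
  have hac : a * c ≤ 0 := mul_nonpos_of_nonneg_of_nonpos ha_pos.le hc_nonpos
  have hd := discrim_nonneg_of_mul_nonpos (b := b) hac
  rw [← discrim] at hτ ⊢
  refine ⟨ha_pos, hc_nonpos, hd, quadratic_eq_zero_of_eq_sqrt_discrim ha_pos.ne' hd hτ, ?_⟩
  rw [hτ]
  exact div_nonneg (neg_add_sqrt_discrim_nonneg_of_mul_nonpos hac) (by linarith)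

/-- The quadratic equation arising in the evaluation of the resolvent of the
homogeneous embedding operator always has a real nonnegative root: with
`(I + M)p = μ`, `(I + M)r = q`, `a = 1 + rᵀr`, `b = rᵀμ - 2rᵀp - η`,
`c = pᵀ(p - μ)`, we have `a > 0`, `c ≤ 0`, `b² - 4ac ≥ 0`, and
`τ = (-b + √(b² - 4ac)) / (2a)` satisfies `aτ² + bτ + c = 0` and `τ ≥ 0`. -/
theorem resolvent_quadratic_has_nonneg_root
    {d : ℕ} (M : Matrix (Fin d) (Fin d) ℝ)
    (hM : (M + Mᵀ).PosSemidef)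
    (q μ : Fin d → ℝ) (η : ℝ)
    (p r : Fin d → ℝ)
    (hp : (1 + M) *ᵥ p = μ) (hr : (1 + M) *ᵥ r = q)
    (a b c : ℝ)
    (ha : a = 1 + r ⬝ᵥ r)
    (hb : b = r ⬝ᵥ μ - 2 * (r ⬝ᵥ p) - η)
    (hc : c = p ⬝ᵥ (p - μ))
    (τ : ℝ) (hτ : τ = (-b + Real.sqrt (b ^ 2 - 4 * a * c)) / (2 * a)) :
    0 < a ∧ c ≤ 0 ∧ b ^ 2 - 4 * a * c ≥ 0 ∧
      a * τ ^ 2 + b * τ + c = 0 ∧ 0 ≤ τ :=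
  resolvent_quadratic_has_nonneg_root_general M hM μ p r hp a b c ha hc τ hτ
end
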